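/- arXiv:2602.04924 — 2 statements merged into one kernel-verified Lean document; each statement's English description precedes it below -/
import Mathlib

section
/- Let (Ω, ℱ, μ) be a probability space, let Y : Ω → Fin K be a measurable label (with K ≥ 1), and let 𝒢 ⊆ ℱ be a sub-σ-algebra representing the input. Suppose p : Fin K → Ω → ℝ is a family of 𝒢-measurable functions such that for every k, p k is (a version of) the conditional probability μ[𝟙{Y = k} | 𝒢]. Define the MAP prediction ŷ : Ω → Fin K as a 𝒢-measurable selection of argmax over k of p k, i.e., ŷ is 𝒢-measurable and p (ŷ ω) ω = max over k of p k ω for all ω. Then μ-almost everywhere, μ[𝟙{Y = ŷ} | 𝒢] = max over k of p k; that is, the maximum softmax probability equals the conditional probability of correctness of the MAP prediction. -/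
open MeasureTheory Real


lemma aux_indicator_integrable {Ω : Type*} {mΩ : MeasurableSpace Ω} (μ : Measure Ω)
    {s : Set Ω} (hs : MeasurableSet s) {f : Ω → ℝ} (hf : Integrable f μ) :
    Integrable (s.indicator f) μ :=
  hf.indicator hs

lemma aux_const_indicator_integrable {Ω : Type*} {mΩ : MeasurableSpace Ω} (μ : Measure Ω)
    [IsFiniteMeasure μ] {s : Set Ω} (hs : MeasurableSet s) :
    Integrable (s.indicator fun _ => (1 : ℝ)) μ :=
  (integrable_const 1).indicator hs

/-- MSP optimality under strong calibration (part 1 of Theorem 3.3):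
if each class probability `p k` is a version of the conditional probability
`μ[𝟙{Y = k} | m]` and the MAP prediction `yhat` is an `m`-measurable argmax of
the `p k`, then the conditional probability of correctness of the MAP
prediction equals the maximum softmax probability `max_k p k`, μ-a.e. -/
theorem msp_equals_correctness_probability
    {Ω : Type*} (m : MeasurableSpace Ω) [mΩ : MeasurableSpace Ω] (μ : Measure Ω) [IsProbabilityMeasure μ]
    (hm : m ≤ mΩ)
    (K : ℕ) (hK : 1 ≤ K)
    (Y : Ω → Fin K) (hY : Measurable Y)
    (p : Fin K → Ω → ℝ)
    (hpmeas : ∀ k, StronglyMeasurable[m] (p k))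
    (hcal : ∀ k, p k =ᵐ[μ] μ[(fun ω => if Y ω = k then (1 : ℝ) else 0)|m])
    (yhat : Ω → Fin K) (hyhat : Measurable[m] yhat)
    (hmap : ∀ ω, p (yhat ω) ω = ⨆ k, p k ω) :
    μ[(fun ω => if Y ω = yhat ω then (1 : ℝ) else 0)|m] =ᵐ[μ] fun ω => ⨆ k, p k ω := by
  classical
  -- inner indicator functions
  set g : Fin K → Ω → ℝ := fun k ω => if Y ω = k then (1 : ℝ) else 0 with hg
  have hgint : ∀ k, @Integrable ℝ _ _ Ω mΩ (g k) μ := by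
    intro k
    have : g k = Set.indicator {ω | Y ω = k} (fun _ => (1 : ℝ)) := by
      funext ω; simp [hg, Set.indicator_apply]
    rw [this]
    exact aux_const_indicator_integrable μ (hY (MeasurableSet.singleton k))
  have hsets : ∀ k : Fin K, MeasurableSet[m] {ω' | yhat ω' = k} :=
    fun k => hyhat (measurableSet_singleton k)
  -- decompose the correctness indicator
  have hfdecomp : (fun ω => if Y ω = yhat ω then (1 : ℝ) else 0) =
      ∑ k : Fin K, Set.indicator {ω' | yhat ω' = k} (g k) := by
    funext ω
    simp only [Finset.sum_apply]
    rw [Finset.sum_eq_single (yhat ω)]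
    · simp [Set.indicator_apply, hg]
    · intro k _ hk
      have : ω ∉ {ω' | yhat ω' = k} := fun h => hk (h ▸ rfl)
      simp [Set.indicator_of_notMem this]
    · simp
  have hgiint : ∀ k, @Integrable ℝ _ _ Ω mΩ (Set.indicator {ω' | yhat ω' = k} (g k)) μ :=
    fun k => aux_indicator_integrable μ (hm _ (hsets k)) (hgint k)
  -- conditional expectation of each term
  have hterm : ∀ k : Fin K,
      μ[Set.indicator {ω' | yhat ω' = k} (g k)|m] =ᵐ[μ]
        Set.indicator {ω' | yhat ω' = k} (p k) := by
    intro k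
    have h1 := condExp_indicator (hgint k) (hsets k)
    have h2 : Set.indicator {ω' | yhat ω' = k} (μ[g k|m]) =ᵐ[μ]
        Set.indicator {ω' | yhat ω' = k} (p k) := by
      filter_upwards [hcal k] with ω hω
      simp only [Set.indicator_apply]
      split <;> simp [hω, hg]
    exact h1.trans h2
  have hsum := condExp_finset_sum (s := Finset.univ) (f := fun k => Set.indicator {ω' | yhat ω' = k} (g k)) (fun k _ => hgiint k) (m := m)
  have hall : ∀ᵐ ω ∂μ, ∀ k : Fin K,
      (μ[Set.indicator {ω' | yhat ω' = k} (g k)|m]) ω =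
        Set.indicator {ω' | yhat ω' = k} (p k) ω :=
    (ae_all_iff).2 fun k => hterm k
  rw [hfdecomp]
  filter_upwards [hsum, hall] with ω h1 h2
  rw [h1]
  simp only [Finset.sum_apply]
  have : ∑ k : Fin K, (μ[Set.indicator {ω' | yhat ω' = k} (g k)|m]) ω
      = ∑ k : Fin K, Set.indicator {ω' | yhat ω' = k} (p k) ω :=
    Finset.sum_congr rfl fun k _ => h2 k
  rw [this, Finset.sum_eq_single (yhat ω)]
  · rw [← hmap ω]; simp [Set.indicator_apply]
  · intro k _ hk
    have : ω ∉ {ω' | yhat ω' = k} := fun h => hk (h ▸ rfl)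
    simp [Set.indicator_of_notMem this]
  · simp
end

section
/- Let (Ω, ℱ, μ) be a probability space and let g* : Ω → ℝ be a measurable function with 0 ≤ g* ≤ 1. Fix γ ∈ ℝ and let A_γ = {ω : g*(ω) ≥ γ} be the superlevel set of g* at level γ. Then for every measurable set B ⊆ Ω with μ(B) = μ(A_γ), one has ∫_B g* dμ ≤ ∫_{A_γ} g* dμ. Consequently, among all selection rules accepting the same fraction of samples, accepting exactly the samples whose conditional correctness probability g* exceeds the threshold maximizes the expected number of correct accepted predictions, i.e., minimizes the selective risk at that coverage level. -/
open MeasureTheory Real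

/-! Exchange argument: `B` and `A_γ` share `B ∩ A_γ`, and the parts where they differ have equal
measure. On `B \ A_γ` the integrand is below `γ`, on `A_γ \ B` it is at least `γ`, so trading
the first for the second cannot decrease the integral. -/

namespace MeasureTheory

variable {X : Type*} [MeasurableSpace X] {μ : Measure X} {f : X → ℝ} {s t : Set X} {c : ℝ}

theorem setIntegral_le_of_le_const_real (hs : MeasurableSet s) (hμs : μ s ≠ ⊤)
    (hf : ∀ x ∈ s, f x ≤ c) (hfint : IntegrableOn f s μ) :
    ∫ x in s, f x ∂μ ≤ c * μ.real s := by
  calc ∫ x in s, f x ∂μ ≤ ∫ _ in s, c ∂μ :=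
        setIntegral_mono_on hfint (integrableOn_const hμs) hs hf
    _ = c * μ.real s := by rw [setIntegral_const, smul_eq_mul, mul_comm]

theorem setIntegral_le_setIntegral_of_measure_eq (hs : MeasurableSet s) (ht : MeasurableSet t)
    (hfs : IntegrableOn f s μ) (hft : IntegrableOn f t μ) (hμ : μ s = μ t) (hμs : μ s ≠ ⊤)
    (hle : ∀ x ∈ s \ t, f x ≤ c) (hge : ∀ x ∈ t \ s, c ≤ f x) :
    ∫ x in s, f x ∂μ ≤ ∫ x in t, f x ∂μ := by
  have hμdiff : μ (s \ t) = μ (t \ s) :=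
    measure_sdiff_symm hs.nullMeasurableSet ht.nullMeasurableSet hμ
      (measure_ne_top_of_subset Set.inter_subset_left hμs)
  have hμst : μ (s \ t) ≠ ⊤ := measure_ne_top_of_subset Set.sdiff_subset hμs
  have hdiff : ∫ x in s \ t, f x ∂μ ≤ ∫ x in t \ s, f x ∂μ :=
    calc ∫ x in s \ t, f x ∂μ ≤ c * μ.real (s \ t) :=
          setIntegral_le_of_le_const_real (hs.diff ht) hμst hle
            (hfs.mono_set Set.sdiff_subset)
      _ = c * μ.real (t \ s) := by rw [Measure.real, Measure.real, hμdiff]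
      _ ≤ ∫ x in t \ s, f x ∂μ :=
          setIntegral_ge_of_const_le_real (ht.diff hs) (hμdiff ▸ hμst) hge
            (hft.mono_set Set.sdiff_subset)
  rw [← integral_inter_add_sdiff ht hfs, ← integral_inter_add_sdiff hs hft, Set.inter_comm t s]
  gcongr

end MeasureTheory

/-- Thresholding the Bayes-optimal confidence is optimal at each coverage
level (parts 2–3 of Theorem 3.3): for `g*` with values in `[0,1]` and the
superlevel set `A_γ = {ω | γ ≤ g* ω}`, every measurable set `B` with the same
measure (coverage) as `A_γ` satisfies `∫_B g* ≤ ∫_{A_γ} g*`, i.e. the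
threshold selector maximizes the mass of correct accepted predictions. -/
theorem threshold_selector_optimal
    {Ω : Type*} [MeasurableSpace Ω] (μ : Measure Ω) [IsProbabilityMeasure μ]
    (gstar : Ω → ℝ) (hg : Measurable gstar)
    (hg0 : ∀ ω, 0 ≤ gstar ω) (hg1 : ∀ ω, gstar ω ≤ 1)
    (γ : ℝ) (B : Set Ω) (hB : MeasurableSet B)
    (hcov : μ B = μ {ω | γ ≤ gstar ω}) :
    ∫ ω in B, gstar ω ∂μ ≤ ∫ ω in {ω | γ ≤ gstar ω}, gstar ω ∂μ := by
  have hint : Integrable gstar μ :=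
    .of_bound hg.aestronglyMeasurable 1 <| .of_forall fun ω => by
      rw [Real.norm_eq_abs, abs_of_nonneg (hg0 ω)]
      exact hg1 ω
  exact setIntegral_le_setIntegral_of_measure_eq hB (measurableSet_le measurable_const hg)
    hint.integrableOn hint.integrableOn hcov (measure_ne_top μ B)
    (fun ω hω => le_of_not_ge hω.2) (fun ω hω => hω.1)
end
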